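/- arXiv:2210.09339 — 3 statements merged into one kernel-verified Lean document; each statement's English description precedes it below -/
import Mathlib

section
/- Let p ≥ 1, λ > 0, ϑ > 0, and γ > 1 + 1/ϑ, and let p_γ(t, λ) = λ ∫₀^{|t|} min{1, (γ − x/λ)₊/(γ − 1)} dx be the SCAD penalty. For κ ∈ ℝ^p, define ζ* ∈ ℝ^p by: ζ* = S(κ, λ/ϑ) if ‖κ‖ ≤ λ + λ/ϑ; ζ* = {1 − 1/((γ − 1)ϑ)}⁻¹ S(κ, γλ/((γ − 1)ϑ)) if λ + λ/ϑ < ‖κ‖ ≤ γλ; and ζ* = κ if ‖κ‖ > γλ; where S(w, t) = (1 − t/‖w‖)₊ w (with S(0, t) = 0) and ‖·‖ is the Euclidean norm. Then ζ* is a global minimizer of the function ζ ↦ (ϑ/2)‖κ − ζ‖² + p_γ(‖ζ‖, λ) on ℝ^p. -/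
/-- The SCAD penalty `p_γ(t, λ) = λ ∫₀^{|t|} min{1, (γ − x/λ)₊/(γ − 1)} dx`. -/
noncomputable def scadPenalty (γ lam t : ℝ) : ℝ :=
  lam * ∫ x in (0 : ℝ)..|t|, min 1 (max (γ - x / lam) 0 / (γ - 1))

/-- The groupwise soft-thresholding operator `S(w, t) = (1 − t/‖w‖)₊ w` (with `S(0, t) = 0`,
since in Lean `t / 0 = 0` and the scalar multiplies `0`). -/
noncomputable def softThreshold {p : ℕ} (w : EuclideanSpace ℝ (Fin p)) (t : ℝ) :
    EuclideanSpace ℝ (Fin p) :=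
  max (1 - t / ‖w‖) 0 • w

/-- The three-case closed form of the SCAD proximal map in the ADMM `ζ`-update. -/
noncomputable def scadProx {p : ℕ} (γ lam ϑ : ℝ) (κ : EuclideanSpace ℝ (Fin p)) :
    EuclideanSpace ℝ (Fin p) :=
  if ‖κ‖ ≤ lam + lam / ϑ then softThreshold κ (lam / ϑ)
  else if ‖κ‖ ≤ γ * lam then
    (1 - 1 / ((γ - 1) * ϑ))⁻¹ • softThreshold κ (γ * lam / ((γ - 1) * ϑ))
  else κ

/-! Write `p(t) = ∫₀ᵗ p'` with `p'(x) = λ min{1, (γ − x/λ)₊/(γ − 1)}`. Since `p'(x) + x/(γ − 1)` is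
nondecreasing, `p(r) ≥ p(t) + p'(t)(r − t) − (r − t)²/(2(γ − 1))`, and as `ϑ > 1/(γ − 1)` the
scalar objective `r ↦ ϑ/2 (‖κ‖ − r)² + p(r)` on `r ≥ 0` is minimized at any point satisfying the
first-order condition (one-sided at `r = 0`). The three cases of `scadProx` produce exactly such a
point `‖ζ*‖`. The vector problem reduces to the scalar one because `‖κ − ζ‖ ≥ |‖κ‖ − ‖ζ‖|`, with
equality when `ζ` is a nonnegative multiple of `κ`, as `ζ*` is. -/

theorem le_intervalIntegral_of_monotone_add_mul {f : ℝ → ℝ} {c : ℝ} (hf : Continuous f)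
    (hmono : Monotone fun x => f x + c * x) (t r : ℝ) :
    f t * (r - t) - c / 2 * (r - t) ^ 2 ≤ ∫ x in t..r, f x := by
  have hline : ∫ x in t..r, (f t + c * t - c * x) = f t * (r - t) - c / 2 * (r - t) ^ 2 := by
    rw [intervalIntegral.integral_sub intervalIntegrable_const
      ((continuous_const_mul c).intervalIntegrable _ _),
      intervalIntegral.integral_const, intervalIntegral.integral_const_mul, integral_id,
      smul_eq_mul]
    ring
  have hline_int :
      ∀ a b, IntervalIntegrable (fun x => f t + c * t - c * x) MeasureTheory.volume a b :=
    fun a b => (by fun_prop : Continuous fun x => f t + c * t - c * x).intervalIntegrable a b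
  rw [← hline]
  rcases le_total t r with htr | hrt
  · exact intervalIntegral.integral_mono_on htr (hline_int t r) (hf.intervalIntegrable t r)
      fun x hx => by linarith [hmono hx.1]
  · rw [intervalIntegral.integral_symm r, intervalIntegral.integral_symm r, neg_le_neg_iff]
    exact intervalIntegral.integral_mono_on hrt (hf.intervalIntegrable r t) (hline_int r t)
      fun x hx => by linarith [hmono hx.2]

theorem sq_add_integral_le_of_monotone {f : ℝ → ℝ} {c ϑ a t r : ℝ} (hf : Continuous f)
    (hmono : Monotone fun x => f x + c * x) (hcϑ : c ≤ ϑ)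
    (hstat : 0 ≤ (ϑ * (t - a) + f t) * (r - t)) :
    ϑ / 2 * (a - t) ^ 2 + ∫ x in 0..t, f x ≤ ϑ / 2 * (a - r) ^ 2 + ∫ x in 0..r, f x := by
  have hsplit : ∫ x in 0..r, f x = (∫ x in 0..t, f x) + ∫ x in t..r, f x :=
    (intervalIntegral.integral_add_adjacent_intervals (hf.intervalIntegrable _ _)
      (hf.intervalIntegrable _ _)).symm
  have hlower := le_intervalIntegral_of_monotone_add_mul hf hmono t r
  nlinarith [mul_nonneg (sub_nonneg.2 hcϑ) (sq_nonneg (r - t))]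

theorem sq_norm_sub_add_le_of_sameRay {E : Type*} [NormedAddCommGroup E] [NormedSpace ℝ E]
    {F : ℝ → ℝ} {ϑ : ℝ} (hϑ : 0 ≤ ϑ) {κ ζ₀ : E} (hray : SameRay ℝ κ ζ₀)
    (hmin : ∀ r, 0 ≤ r → ϑ / 2 * (‖κ‖ - ‖ζ₀‖) ^ 2 + F ‖ζ₀‖ ≤ ϑ / 2 * (‖κ‖ - r) ^ 2 + F r)
    (ζ : E) : ϑ / 2 * ‖κ - ζ₀‖ ^ 2 + F ‖ζ₀‖ ≤ ϑ / 2 * ‖κ - ζ‖ ^ 2 + F ‖ζ‖ := by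
  have hsq : (‖κ‖ - ‖ζ‖) ^ 2 ≤ ‖κ - ζ‖ ^ 2 :=
    have h := abs_le.1 (abs_norm_sub_norm_le κ ζ)
    sq_le_sq' h.1 h.2
  rw [hray.norm_sub, sq_abs]
  nlinarith [hmin ‖ζ‖ (norm_nonneg ζ)]

noncomputable def scadDeriv (γ lam x : ℝ) : ℝ :=
  lam * min 1 (max (γ - x / lam) 0 / (γ - 1))

theorem scadPenalty_eq_integral (γ lam : ℝ) {t : ℝ} (ht : 0 ≤ t) :
    scadPenalty γ lam t = ∫ x in 0..t, scadDeriv γ lam x := by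
  rw [scadPenalty, abs_of_nonneg ht, ← intervalIntegral.integral_const_mul]
  rfl

theorem continuous_scadDeriv (γ lam : ℝ) : Continuous (scadDeriv γ lam) := by
  unfold scadDeriv
  fun_prop

section
variable {p : ℕ} {γ lam ϑ x : ℝ}

theorem scadDeriv_of_le (hγ : 1 < γ) (hlam : 0 < lam) (hx : x ≤ lam) :
    scadDeriv γ lam x = lam := by
  have h : γ - 1 ≤ γ - x / lam := by linarith [(div_le_one hlam).2 hx]
  rw [scadDeriv, max_eq_left (by linarith), min_eq_left ((one_le_div (by linarith)).2 h), mul_one]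

theorem scadDeriv_of_mem (hγ : 1 < γ) (hlam : 0 < lam) (h₁ : lam ≤ x) (h₂ : x ≤ γ * lam) :
    scadDeriv γ lam x = (γ * lam - x) / (γ - 1) := by
  have h₁' : 1 ≤ x / lam := (one_le_div hlam).2 h₁
  have h₂' : x / lam ≤ γ := (div_le_iff₀ hlam).2 h₂
  rw [scadDeriv, max_eq_left (by linarith),
    min_eq_right ((div_le_one (by linarith)).2 (by linarith))]
  field_simp

theorem scadDeriv_of_ge (hlam : 0 < lam) (hx : γ * lam ≤ x) : scadDeriv γ lam x = 0 := by
  have h : γ ≤ x / lam := (le_div_iff₀ hlam).2 hx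
  rw [scadDeriv, max_eq_right (by linarith), zero_div, min_eq_right zero_le_one, mul_zero]

theorem monotone_scadDeriv_add (hγ : 1 < γ) (hlam : 0 < lam) :
    Monotone fun x => scadDeriv γ lam x + (γ - 1)⁻¹ * x := by
  have hcoef : (γ - 1)⁻¹ * γ * lam = lam + (γ - 1)⁻¹ * lam := by
    have : γ - 1 ≠ 0 := (sub_pos.2 hγ).ne'
    field_simp
    ring
  have hc0 : 0 ≤ (γ - 1)⁻¹ := inv_nonneg.2 (by linarith)
  have hform : ∀ x, scadDeriv γ lam x + (γ - 1)⁻¹ * x =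
      min (lam + (γ - 1)⁻¹ * x) ((γ - 1)⁻¹ * max (γ * lam) x) := by
    intro x
    rcases le_total x lam with hx | hx
    · rw [scadDeriv_of_le hγ hlam hx, max_eq_left (by nlinarith), min_eq_left]
      nlinarith [mul_le_mul_of_nonneg_left hx hc0]
    rcases le_total x (γ * lam) with hx' | hx'
    · rw [scadDeriv_of_mem hγ hlam hx hx', max_eq_left hx', min_eq_right]
      · field_simp
        ring
      · nlinarith [mul_le_mul_of_nonneg_left hx hc0]
    · rw [scadDeriv_of_ge hlam hx', max_eq_right hx', min_eq_right (by linarith), zero_add]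
  simp only [hform]
  exact Monotone.min (fun x y h => by gcongr) (fun x y h => by gcongr)

theorem norm_softThreshold (κ : EuclideanSpace ℝ (Fin p)) {t : ℝ} (ht : 0 ≤ t) :
    ‖softThreshold κ t‖ = max (‖κ‖ - t) 0 := by
  rcases eq_or_ne κ 0 with rfl | hκ
  · simp [softThreshold, ht]
  · have ha : 0 < ‖κ‖ := norm_pos_iff.2 hκ
    rw [softThreshold, norm_smul, Real.norm_of_nonneg (le_max_right _ _),
      max_mul_of_nonneg _ _ ha.le, zero_mul, sub_mul, one_mul, div_mul_cancel₀ _ ha.ne']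

theorem sameRay_scadProx (hD : 1 ≤ (γ - 1) * ϑ)
    (κ : EuclideanSpace ℝ (Fin p)) : SameRay ℝ κ (scadProx γ lam ϑ κ) := by
  have hST : ∀ t, SameRay ℝ κ (softThreshold κ t) :=
    fun t => SameRay.sameRay_nonneg_smul_right κ (le_max_right _ _)
  have hscale : 0 ≤ (1 - 1 / ((γ - 1) * ϑ))⁻¹ :=
    inv_nonneg.2 (sub_nonneg.2 ((div_le_one (by linarith)).2 hD))
  unfold scadProx
  split_ifs
  · exact hST _
  · exact (hST _).nonneg_smul_right hscale
  · exact SameRay.rfl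

theorem norm_scadProx_of_mem (hlam : 0 < lam) (hϑ : 0 < ϑ)
    (hD : 1 < (γ - 1) * ϑ) {κ : EuclideanSpace ℝ (Fin p)} (h₁ : lam + lam / ϑ < ‖κ‖)
    (h₂ : ‖κ‖ ≤ γ * lam) :
    ‖scadProx γ lam ϑ κ‖ = ((γ - 1) * ϑ * ‖κ‖ - γ * lam) / ((γ - 1) * ϑ - 1) := by
  have hD₀ : 0 < (γ - 1) * ϑ := by linarith
  have hγ₁ : 0 < γ - 1 := (pos_iff_pos_of_mul_pos hD₀).2 hϑ
  have hX : lam / ϑ * ((γ - 1) * ϑ) = (γ - 1) * lam := by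
    linear_combination (γ - 1) * div_mul_cancel₀ lam hϑ.ne'
  have hthr : γ * lam / ((γ - 1) * ϑ) ≤ ‖κ‖ := by
    rw [div_le_iff₀ hD₀]
    linarith [mul_lt_mul_of_pos_right h₁ hD₀, mul_lt_mul_of_pos_left hD hlam]
  have hscale : 0 ≤ (1 - 1 / ((γ - 1) * ϑ))⁻¹ :=
    inv_nonneg.2 (sub_nonneg.2 ((div_le_one hD₀).2 hD.le))
  rw [scadProx, if_neg (not_le.2 h₁), if_pos h₂, norm_smul,
    norm_softThreshold κ (div_pos (mul_pos (by linarith) hlam) hD₀).le,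
    Real.norm_of_nonneg hscale, max_eq_left (sub_nonneg.2 hthr)]
  have : (γ - 1) * ϑ - 1 ≠ 0 := by linarith
  have : γ - 1 ≠ 0 := hγ₁.ne'
  field_simp

theorem scadProx_firstOrder (hlam : 0 < lam) (hϑ : 0 < ϑ)
    (hD : 1 < (γ - 1) * ϑ) (κ : EuclideanSpace ℝ (Fin p)) {r : ℝ} (hr : 0 ≤ r) :
    0 ≤ (ϑ * (‖scadProx γ lam ϑ κ‖ - ‖κ‖) + scadDeriv γ lam ‖scadProx γ lam ϑ κ‖) *
      (r - ‖scadProx γ lam ϑ κ‖) := by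
  have hγ : 1 < γ := by linarith [(pos_iff_pos_of_mul_pos (by linarith : 0 < (γ - 1) * ϑ)).2 hϑ]
  by_cases h₁ : ‖κ‖ ≤ lam + lam / ϑ
  · have hX : ϑ * (lam / ϑ) = lam := mul_div_cancel₀ _ hϑ.ne'
    rw [scadProx, if_pos h₁, norm_softThreshold κ (div_pos hlam hϑ).le]
    rcases le_total ‖κ‖ (lam / ϑ) with hsmall | hlarge
    · rw [max_eq_right (sub_nonpos.2 hsmall), scadDeriv_of_le hγ hlam hlam.le]
      nlinarith [mul_le_mul_of_nonneg_left hsmall hϑ.le]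
    · rw [max_eq_left (sub_nonneg.2 hlarge), scadDeriv_of_le hγ hlam (by linarith)]
      nlinarith
  by_cases h₂ : ‖κ‖ ≤ γ * lam
  · have hD₁ : 0 < (γ - 1) * ϑ - 1 := by linarith
    rw [norm_scadProx_of_mem hlam hϑ hD (not_le.1 h₁) h₂]
    set s := ((γ - 1) * ϑ * ‖κ‖ - γ * lam) / ((γ - 1) * ϑ - 1)
    have hs : s * ((γ - 1) * ϑ - 1) = (γ - 1) * ϑ * ‖κ‖ - γ * lam := div_mul_cancel₀ _ hD₁.ne'
    have hX : lam / ϑ * ((γ - 1) * ϑ) = (γ - 1) * lam := by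
      linear_combination (γ - 1) * div_mul_cancel₀ lam hϑ.ne'
    have hs₁ : lam ≤ s := by
      rw [le_div_iff₀ hD₁]
      linarith [mul_lt_mul_of_pos_right (not_le.1 h₁) (by linarith : 0 < (γ - 1) * ϑ)]
    have hs₂ : s ≤ γ * lam := by
      rw [div_le_iff₀ hD₁]
      nlinarith
    have hγ₁ : γ - 1 ≠ 0 := (sub_pos.2 hγ).ne'
    have hzero : ϑ * (s - ‖κ‖) + (γ * lam - s) / (γ - 1) = 0 := by
      have : (γ - 1) * (ϑ * (s - ‖κ‖) + (γ * lam - s) / (γ - 1)) = 0 := by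
        rw [mul_add, mul_div_cancel₀ _ hγ₁]
        linear_combination hs
      exact (mul_eq_zero.1 this).resolve_left hγ₁
    rw [scadDeriv_of_mem hγ hlam hs₁ hs₂, hzero, zero_mul]
  · rw [scadProx, if_neg h₁, if_neg h₂, scadDeriv_of_ge hlam (not_le.1 h₂).le]
    simp

end

theorem scadProx_isMinimizer_general
    (p : ℕ) (lam ϑ γ : ℝ)
    (hlam : 0 < lam) (hϑ : 0 < ϑ) (hγ : 1 + 1 / ϑ < γ)
    (κ : EuclideanSpace ℝ (Fin p)) :
    ∀ ζ : EuclideanSpace ℝ (Fin p),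
      ϑ / 2 * ‖κ - scadProx γ lam ϑ κ‖ ^ 2 + scadPenalty γ lam ‖scadProx γ lam ϑ κ‖
        ≤ ϑ / 2 * ‖κ - ζ‖ ^ 2 + scadPenalty γ lam ‖ζ‖ := by
  have hinv : ϑ⁻¹ < γ - 1 := by linarith [one_div ϑ]
  have hγ₁ : 1 < γ := by linarith [inv_pos.2 hϑ]
  have hcurv : (γ - 1)⁻¹ < ϑ := (inv_lt_comm₀ (by linarith) hϑ).2 hinv
  have hD : 1 < (γ - 1) * ϑ := by
    simpa [inv_mul_cancel₀ hϑ.ne'] using mul_lt_mul_of_pos_right hinv hϑ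
  refine sq_norm_sub_add_le_of_sameRay hϑ.le (sameRay_scadProx hD.le κ) fun r hr => ?_
  rw [scadPenalty_eq_integral γ lam (norm_nonneg _), scadPenalty_eq_integral γ lam hr]
  exact sq_add_integral_le_of_monotone (continuous_scadDeriv γ lam)
    (monotone_scadDeriv_add hγ₁ hlam) hcurv.le (scadProx_firstOrder hlam hϑ hD κ hr)

/-- For `γ > 1 + 1/ϑ`, the three-case SCAD update `scadProx γ lam ϑ κ` is a
global minimizer of `ζ ↦ (ϑ/2)‖κ − ζ‖² + p_γ(‖ζ‖, λ)` on `ℝ^p`. -/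
theorem scadProx_isMinimizer
    (p : ℕ) (hp : 1 ≤ p) (lam ϑ γ : ℝ)
    (hlam : 0 < lam) (hϑ : 0 < ϑ) (hγ : 1 + 1 / ϑ < γ)
    (κ : EuclideanSpace ℝ (Fin p)) :
    ∀ ζ : EuclideanSpace ℝ (Fin p),
      ϑ / 2 * ‖κ - scadProx γ lam ϑ κ‖ ^ 2 + scadPenalty γ lam ‖scadProx γ lam ϑ κ‖
        ≤ ϑ / 2 * ‖κ - ζ‖ ^ 2 + scadPenalty γ lam ‖ζ‖ :=
  scadProx_isMinimizer_general p lam ϑ γ hlam hϑ hγ κ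
end

section
/- Let n, p, q, s ≥ 1, let y ∈ ℝⁿ, let Z be a real n × q matrix of full column rank, X a real n × p matrix, A a real s × p matrix, c ∈ ℝ^s, ϑ > 0, and let W be a real symmetric positive definite n × n matrix. Set Q = W − W Z (Zᵀ W Z)⁻¹ Zᵀ W and assume Xᵀ Q X + ϑ Aᵀ A is positive definite. Then the quadratic function f(β, η) = (y − Zη − Xβ)ᵀ W (y − Zη − Xβ) + ϑ (Aβ − c)ᵀ (Aβ − c) on ℝ^p × ℝ^q attains its unique global minimum at β* = (Xᵀ Q X + ϑ Aᵀ A)⁻¹ (Xᵀ Q y + ϑ Aᵀ c) and η* = (Zᵀ W Z)⁻¹ Zᵀ W (y − X β*). -/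
/-!
Profiling out `η`: for fixed `β` the criterion is a quadratic in `η` with Hessian
`M = Zᵀ W Z`, positive definite since `Z` is injective, and completing the square gives
`f(β, η) = g(β) + (η - η̂(β))ᵀ M (η - η̂(β))` with `η̂(β) = M⁻¹ Zᵀ W (y - X β)` and
`g(β) = (y - Xβ)ᵀ Q (y - Xβ) + ϑ |Aβ - c|²`. Completing the square once more,
`g(β) = g(β*) + (β - β*)ᵀ H (β - β*)` with `H = Xᵀ Q X + ϑ Aᵀ A`, because `β*` solves the
normal equations `H β* = Xᵀ Q y + ϑ Aᵀ c`. Both remainders are positive definite quadratic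
forms, and they vanish together only at `(β*, η*)`.
-/

open Matrix

namespace Matrix

section CommRing

variable {R m k : Type*} [CommRing R] [Fintype m]

lemma IsSymm.transpose_mul_mul {S : Matrix m m R} (hS : S.IsSymm) (B : Matrix m k R) :
    (Bᵀ * S * B).IsSymm := by
  simp only [IsSymm, transpose_mul, transpose_transpose, hS.eq, Matrix.mul_assoc]

variable [Fintype k]

lemma mulVec_dotProduct_eq_dotProduct_transpose_mulVec (B : Matrix m k R) (x : k → R)
    (w : m → R) : (B *ᵥ x) ⬝ᵥ w = x ⬝ᵥ (Bᵀ *ᵥ w) := by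
  rw [dotProduct_mulVec, vecMul_transpose]

lemma IsSymm.dotProduct_mulVec_comm {S : Matrix m m R} (hS : S.IsSymm) (x w : m → R) :
    x ⬝ᵥ (S *ᵥ w) = w ⬝ᵥ (S *ᵥ x) := by
  rw [dotProduct_comm w, mulVec_dotProduct_eq_dotProduct_transpose_mulVec, hS.eq]

lemma IsSymm.dotProduct_mulVec_sub_mulVec {S : Matrix m m R} (hS : S.IsSymm)
    (B : Matrix m k R) (r : m → R) (x : k → R) :
    (r - B *ᵥ x) ⬝ᵥ (S *ᵥ (r - B *ᵥ x))
      = r ⬝ᵥ (S *ᵥ r) - 2 * (x ⬝ᵥ (Bᵀ *ᵥ (S *ᵥ r))) + x ⬝ᵥ ((Bᵀ * S * B) *ᵥ x) := by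
  have hcross : (B *ᵥ x) ⬝ᵥ (S *ᵥ r) = x ⬝ᵥ (Bᵀ *ᵥ (S *ᵥ r)) :=
    mulVec_dotProduct_eq_dotProduct_transpose_mulVec _ _ _
  have hquad : (B *ᵥ x) ⬝ᵥ (S *ᵥ (B *ᵥ x)) = x ⬝ᵥ ((Bᵀ * S * B) *ᵥ x) := by
    rw [mulVec_dotProduct_eq_dotProduct_transpose_mulVec, mulVec_mulVec, mulVec_mulVec,
      Matrix.mul_assoc]
  rw [mulVec_sub, dotProduct_sub, sub_dotProduct, sub_dotProduct,
    hS.dotProduct_mulVec_comm r (B *ᵥ x), hcross, hquad]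
  ring

lemma IsSymm.dotProduct_mulVec_sub_two_mul_of_mulVec_eq {S : Matrix m m R} (hS : S.IsSymm)
    {x₀ b : m → R} (h : S *ᵥ x₀ = b) (x : m → R) :
    x ⬝ᵥ (S *ᵥ x) - 2 * (x ⬝ᵥ b) = (x - x₀) ⬝ᵥ (S *ᵥ (x - x₀)) - x₀ ⬝ᵥ b := by
  rw [mulVec_sub, dotProduct_sub, sub_dotProduct, sub_dotProduct, hS.dotProduct_mulVec_comm x₀,
    h]
  ring

variable {l : Type*} [Fintype l]

lemma IsSymm.penalizedLeastSquares_expand {S : Matrix m m R} (hS : S.IsSymm)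
    (X : Matrix m k R) (A : Matrix l k R) (ϑ : R) (y : m → R) (c : l → R) (β : k → R) :
    (y - X *ᵥ β) ⬝ᵥ (S *ᵥ (y - X *ᵥ β)) + ϑ * ((A *ᵥ β - c) ⬝ᵥ (A *ᵥ β - c))
      = y ⬝ᵥ (S *ᵥ y) + ϑ * (c ⬝ᵥ c)
        + (β ⬝ᵥ ((Xᵀ * S * X + ϑ • (Aᵀ * A)) *ᵥ β)
          - 2 * (β ⬝ᵥ (Xᵀ *ᵥ (S *ᵥ y) + ϑ • (Aᵀ *ᵥ c)))) := by
  classical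
  have hpenalty : (A *ᵥ β - c) ⬝ᵥ (A *ᵥ β - c) = (c - A *ᵥ β) ⬝ᵥ (1 *ᵥ (c - A *ᵥ β)) := by
    rw [one_mulVec, ← neg_sub c, neg_dotProduct_neg]
  rw [hpenalty, hS.dotProduct_mulVec_sub_mulVec, isSymm_one.dotProduct_mulVec_sub_mulVec]
  simp only [Matrix.mul_one, one_mulVec, add_mulVec, smul_mulVec, dotProduct_add,
    dotProduct_smul, smul_eq_mul]
  ring

lemma IsSymm.penalizedLeastSquares_eq_add_of_normalEq {S : Matrix m m R} (hS : S.IsSymm)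
    {X : Matrix m k R} {A : Matrix l k R} {ϑ : R} {y : m → R} {c : l → R} {β₀ : k → R}
    (hβ₀ : (Xᵀ * S * X + ϑ • (Aᵀ * A)) *ᵥ β₀ = Xᵀ *ᵥ (S *ᵥ y) + ϑ • (Aᵀ *ᵥ c)) (β : k → R) :
    (y - X *ᵥ β) ⬝ᵥ (S *ᵥ (y - X *ᵥ β)) + ϑ * ((A *ᵥ β - c) ⬝ᵥ (A *ᵥ β - c))
      = (y - X *ᵥ β₀) ⬝ᵥ (S *ᵥ (y - X *ᵥ β₀)) + ϑ * ((A *ᵥ β₀ - c) ⬝ᵥ (A *ᵥ β₀ - c))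
        + (β - β₀) ⬝ᵥ ((Xᵀ * S * X + ϑ • (Aᵀ * A)) *ᵥ (β - β₀)) := by
  have hAA : (Aᵀ * A).IsSymm := by simp only [IsSymm, transpose_mul, transpose_transpose]
  have hH : (Xᵀ * S * X + ϑ • (Aᵀ * A)).IsSymm := (hS.transpose_mul_mul X).add (hAA.smul ϑ)
  rw [hS.penalizedLeastSquares_expand, hS.penalizedLeastSquares_expand,
    hH.dotProduct_mulVec_sub_two_mul_of_mulVec_eq hβ₀ β,
    hH.dotProduct_mulVec_sub_two_mul_of_mulVec_eq hβ₀ β₀, sub_self, mulVec_zero,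
    dotProduct_zero]
  ring

variable [DecidableEq k]

lemma IsSymm.sub_mul_mul_inv_mul_mul {S : Matrix m m R} (hS : S.IsSymm) (B : Matrix m k R) :
    (S - S * B * (Bᵀ * S * B)⁻¹ * Bᵀ * S).IsSymm := by
  refine hS.sub ?_
  simpa [Matrix.mul_assoc, hS.eq] using (hS.transpose_mul_mul B).inv.transpose_mul_mul (Bᵀ * S)

lemma IsSymm.dotProduct_mulVec_sub_mulVec_eq_residual_add {S : Matrix m m R} (hS : S.IsSymm)
    {B : Matrix m k R} (hB : IsUnit (Bᵀ * S * B).det) (r : m → R) (x : k → R) :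
    (r - B *ᵥ x) ⬝ᵥ (S *ᵥ (r - B *ᵥ x))
      = r ⬝ᵥ ((S - S * B * (Bᵀ * S * B)⁻¹ * Bᵀ * S) *ᵥ r)
        + (x - (Bᵀ * S * B)⁻¹ *ᵥ (Bᵀ *ᵥ (S *ᵥ r)))
          ⬝ᵥ ((Bᵀ * S * B) *ᵥ (x - (Bᵀ * S * B)⁻¹ *ᵥ (Bᵀ *ᵥ (S *ᵥ r)))) := by
  set M := Bᵀ * S * B
  set x₀ := M⁻¹ *ᵥ (Bᵀ *ᵥ (S *ᵥ r))
  have hx₀ : M *ᵥ x₀ = Bᵀ *ᵥ (S *ᵥ r) := by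
    rw [mulVec_mulVec, mul_nonsing_inv _ hB, one_mulVec]
  have hprojection : r ⬝ᵥ ((S * B * M⁻¹ * Bᵀ * S) *ᵥ r) = x₀ ⬝ᵥ (Bᵀ *ᵥ (S *ᵥ r)) := by
    rw [← mulVec_dotProduct_eq_dotProduct_transpose_mulVec, ← hS.dotProduct_mulVec_comm]
    simp only [x₀, mulVec_mulVec, Matrix.mul_assoc]
  have hsquare := (hS.transpose_mul_mul B).dotProduct_mulVec_sub_two_mul_of_mulVec_eq hx₀ x
  rw [hS.dotProduct_mulVec_sub_mulVec, sub_mulVec, dotProduct_sub, hprojection]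
  linear_combination hsquare

end CommRing

lemma PosDef.dotProduct_mulVec_add_dotProduct_mulVec_pos {m k : Type*} [Fintype m] [Fintype k]
    {H : Matrix m m ℝ} {M : Matrix k k ℝ} (hH : H.PosDef) (hM : M.PosDef) {d : m → ℝ}
    {e : k → ℝ} (hde : (d, e) ≠ 0) : 0 < d ⬝ᵥ (H *ᵥ d) + e ⬝ᵥ (M *ᵥ e) := by
  by_cases hd : d = 0
  · have he : e ≠ 0 := fun he => hde (by rw [hd, he, Prod.mk_zero_zero])
    simpa [hd] using hM.dotProduct_mulVec_pos he
  · have hHd := hH.dotProduct_mulVec_pos hd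
    have hMe := hM.posSemidef.dotProduct_mulVec_nonneg e
    simp only [star_trivial] at hHd hMe
    linarith

end Matrix

open Matrix

theorem admm_beta_eta_update_closed_form_general
    (n p q s : ℕ)
    (y : Fin n → ℝ)
    (Z : Matrix (Fin n) (Fin q) ℝ) (X : Matrix (Fin n) (Fin p) ℝ)
    (A : Matrix (Fin s) (Fin p) ℝ) (c : Fin s → ℝ)
    (ϑ : ℝ)
    (W : Matrix (Fin n) (Fin n) ℝ) (hW : W.PosDef)
    (hZ : LinearIndependent ℝ (fun j : Fin q => Zᵀ j))
    (Q : Matrix (Fin n) (Fin n) ℝ)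
    (hQ : Q = W - W * Z * (Zᵀ * W * Z)⁻¹ * Zᵀ * W)
    (hpos : (Xᵀ * Q * X + ϑ • (Aᵀ * A)).PosDef)
    (βstar : Fin p → ℝ) (ηstar : Fin q → ℝ)
    (hβstar : βstar = (Xᵀ * Q * X + ϑ • (Aᵀ * A))⁻¹ *ᵥ (Xᵀ *ᵥ (Q *ᵥ y) + ϑ • (Aᵀ *ᵥ c)))
    (hηstar : ηstar = (Zᵀ * W * Z)⁻¹ *ᵥ (Zᵀ *ᵥ (W *ᵥ (y - X *ᵥ βstar)))) :
    ∀ β : Fin p → ℝ, ∀ η : Fin q → ℝ, (β, η) ≠ (βstar, ηstar) →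
      (y - Z *ᵥ ηstar - X *ᵥ βstar) ⬝ᵥ (W *ᵥ (y - Z *ᵥ ηstar - X *ᵥ βstar))
          + ϑ * ((A *ᵥ βstar - c) ⬝ᵥ (A *ᵥ βstar - c))
        < (y - Z *ᵥ η - X *ᵥ β) ⬝ᵥ (W *ᵥ (y - Z *ᵥ η - X *ᵥ β))
          + ϑ * ((A *ᵥ β - c) ⬝ᵥ (A *ᵥ β - c)) := by
  intro β η hne
  have hWsymm : W.IsSymm := isHermitian_iff_isSymm.mp hW.isHermitian
  have hM : (Zᵀ * W * Z).PosDef := by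
    simpa using hW.conjTranspose_mul_mul_same (mulVec_injective_iff.mpr hZ)
  have hQsymm : Q.IsSymm := hQ ▸ hWsymm.sub_mul_mul_inv_mul_mul Z
  have hprofile (β : Fin p → ℝ) (η : Fin q → ℝ) := by
    have := hWsymm.dotProduct_mulVec_sub_mulVec_eq_residual_add
      ((isUnit_iff_isUnit_det _).mp hM.isUnit) (y - X *ᵥ β) η
    rwa [sub_right_comm, ← hQ] at this
  have hnormal : (Xᵀ * Q * X + ϑ • (Aᵀ * A)) *ᵥ βstar = Xᵀ *ᵥ (Q *ᵥ y) + ϑ • (Aᵀ *ᵥ c) := by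
    rw [hβstar, mulVec_mulVec, mul_nonsing_inv _ ((isUnit_iff_isUnit_det _).mp hpos.isUnit),
      one_mulVec]
  have hbound : 0 < (β - βstar) ⬝ᵥ ((Xᵀ * Q * X + ϑ • (Aᵀ * A)) *ᵥ (β - βstar))
      + (η - (Zᵀ * W * Z)⁻¹ *ᵥ (Zᵀ *ᵥ (W *ᵥ (y - X *ᵥ β))))
        ⬝ᵥ ((Zᵀ * W * Z) *ᵥ (η - (Zᵀ * W * Z)⁻¹ *ᵥ (Zᵀ *ᵥ (W *ᵥ (y - X *ᵥ β))))) := by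
    refine hpos.dotProduct_mulVec_add_dotProduct_mulVec_pos hM fun h => hne ?_
    obtain ⟨hβ, hη⟩ := Prod.ext_iff.mp h
    rw [sub_eq_zero.mp hβ] at hη ⊢
    rw [sub_eq_zero.mp hη, hηstar]
  rw [hprofile, hprofile, ← hηstar, sub_self, mulVec_zero, dotProduct_zero, add_zero]
  linarith [hQsymm.penalizedLeastSquares_eq_add_of_normalEq hnormal β]

/-- Closed form for the joint `(β, η)`-update of the ADMM algorithm: the
weighted penalized least-squares criterion
`f(β, η) = (y − Zη − Xβ)ᵀ W (y − Zη − Xβ) + ϑ (Aβ − c)ᵀ (Aβ − c)`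
attains its unique global minimum at
`β* = (Xᵀ Q X + ϑ Aᵀ A)⁻¹ (Xᵀ Q y + ϑ Aᵀ c)` and
`η* = (Zᵀ W Z)⁻¹ Zᵀ W (y − X β*)`, where `Q = W − W Z (Zᵀ W Z)⁻¹ Zᵀ W`. -/
theorem admm_beta_eta_update_closed_form
    (n p q s : ℕ) (hn : 1 ≤ n) (hp : 1 ≤ p) (hq : 1 ≤ q) (hs : 1 ≤ s)
    (y : Fin n → ℝ)
    (Z : Matrix (Fin n) (Fin q) ℝ) (X : Matrix (Fin n) (Fin p) ℝ)
    (A : Matrix (Fin s) (Fin p) ℝ) (c : Fin s → ℝ)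
    (ϑ : ℝ) (hϑ : 0 < ϑ)
    (W : Matrix (Fin n) (Fin n) ℝ) (hW : W.PosDef)
    (hZ : LinearIndependent ℝ (fun j : Fin q => Zᵀ j))
    (Q : Matrix (Fin n) (Fin n) ℝ)
    (hQ : Q = W - W * Z * (Zᵀ * W * Z)⁻¹ * Zᵀ * W)
    (hpos : (Xᵀ * Q * X + ϑ • (Aᵀ * A)).PosDef)
    (βstar : Fin p → ℝ) (ηstar : Fin q → ℝ)
    (hβstar : βstar = (Xᵀ * Q * X + ϑ • (Aᵀ * A))⁻¹ *ᵥ (Xᵀ *ᵥ (Q *ᵥ y) + ϑ • (Aᵀ *ᵥ c)))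
    (hηstar : ηstar = (Zᵀ * W * Z)⁻¹ *ᵥ (Zᵀ *ᵥ (W *ᵥ (y - X *ᵥ βstar)))) :
    ∀ β : Fin p → ℝ, ∀ η : Fin q → ℝ, (β, η) ≠ (βstar, ηstar) →
      (y - Z *ᵥ ηstar - X *ᵥ βstar) ⬝ᵥ (W *ᵥ (y - Z *ᵥ ηstar - X *ᵥ βstar))
          + ϑ * ((A *ᵥ βstar - c) ⬝ᵥ (A *ᵥ βstar - c))
        < (y - Z *ᵥ η - X *ᵥ β) ⬝ᵥ (W *ᵥ (y - Z *ᵥ η - X *ᵥ β))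
          + ϑ * ((A *ᵥ β - c) ⬝ᵥ (A *ᵥ β - c)) :=
  admm_beta_eta_update_closed_form_general n p q s y Z X A c ϑ W hW hZ Q hQ hpos βstar ηstar hβstar
    hηstar
end

section
/- Let m, p, K ≥ 1, let 𝒢₁, …, 𝒢_K be a partition of {1, …, m} into nonempty sets with K ≥ 2, let γ > 1 and λ > 0, and let p_γ(t, λ) = λ ∫₀^{|t|} min{1, (γ − x/λ)₊/(γ − 1)} dx be the SCAD penalty. Let α₁⁰, …, α_K⁰ ∈ ℝ^p satisfy ‖α_k⁰ − α_{k'}⁰‖ ≥ b for all k ≠ k', let β₁, …, β_m ∈ ℝ^p with β_i⁰ = α_k⁰ for i ∈ 𝒢_k and max_i ‖β_i − β_i⁰‖ ≤ ε, and let α_k = |𝒢_k|⁻¹ Σ_{i ∈ 𝒢_k} β_i be the group averages. If b − 2ε > γλ, then ‖α_k − α_{k'}‖ > γλ for all k ≠ k', and consequently the grouped penalty Σ_{1 ≤ k < k' ≤ K} |𝒢_k| |𝒢_{k'}| p_γ(‖α_k − α_{k'}‖, λ) equals the constant (λ²(γ + 1)/2) Σ_{1 ≤ k < k' ≤ K}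 |𝒢_k| |𝒢_{k'}|, independent of β. -/
/-!
Once `b − 2ε > γλ`, every pair of group averages is more than `γλ` apart: each average is a
convex combination of points within `ε` of its true center, hence itself within `ε` of it, and
the triangle inequality loses at most `2ε` of the separation `b`. The SCAD penalty is flat on
`[γλ, ∞)`, so every summand of the grouped penalty takes the value `λ²(γ + 1)/2`.
-/

open Finset

noncomputable def scadWeight (γ lam x : ℝ) : ℝ :=
  min 1 (max (γ - x / lam) 0 / (γ - 1))

section scadWeight

variable {γ lam : ℝ}

theorem continuous_scadWeight : Continuous (scadWeight γ lam) :=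
  continuous_const.min <|
    ((continuous_const.sub (continuous_id.div_const lam)).max continuous_const).div_const _

theorem scadWeight_of_le (hγ : 1 < γ) (hlam : 0 < lam) {x : ℝ} (hx : x ≤ lam) :
    scadWeight γ lam x = 1 := by
  have hx' : x / lam ≤ 1 := (div_le_one hlam).2 hx
  rw [scadWeight, max_eq_left (by linarith), min_eq_left]
  exact (le_div_iff₀ (by linarith)).2 (by linarith)

theorem scadWeight_of_mem_Icc (hγ : 1 < γ) (hlam : 0 < lam) {x : ℝ}
    (hx : x ∈ Set.Icc lam (γ * lam)) :
    scadWeight γ lam x = (γ - x / lam) / (γ - 1) := by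
  have hx₁ : 1 ≤ x / lam := (le_div_iff₀ hlam).2 (by linarith [hx.1])
  have hx₂ : x / lam ≤ γ := (div_le_iff₀ hlam).2 hx.2
  rw [scadWeight, max_eq_left (by linarith), min_eq_right]
  exact (div_le_one (by linarith)).2 (by linarith)

theorem scadWeight_of_ge (hlam : 0 < lam) {x : ℝ} (hx : γ * lam ≤ x) :
    scadWeight γ lam x = 0 := by
  have hx' : γ ≤ x / lam := (le_div_iff₀ hlam).2 hx
  rw [scadWeight, max_eq_right (by linarith), zero_div, min_eq_right zero_le_one]

theorem integral_scadWeight_of_le (hγ : 1 < γ) (hlam : 0 < lam) {s : ℝ} (hs : γ * lam ≤ s) :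
    ∫ x in (0 : ℝ)..s, scadWeight γ lam x = lam * (γ + 1) / 2 := by
  have hint : ∀ a b : ℝ, IntervalIntegrable (scadWeight γ lam) MeasureTheory.volume a b :=
    continuous_scadWeight.intervalIntegrable
  have hlam_le : lam ≤ γ * lam := by nlinarith
  have flat : ∫ x in (0 : ℝ)..lam, scadWeight γ lam x = lam := by
    rw [intervalIntegral.integral_congr (g := fun _ => (1 : ℝ)) fun x hx =>
      scadWeight_of_le hγ hlam (Set.uIcc_of_le hlam.le ▸ hx).2]
    simp
  have ramp : ∫ x in lam..γ * lam, scadWeight γ lam x = lam * (γ - 1) / 2 := by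
    rw [intervalIntegral.integral_congr (g := fun x => (γ - x / lam) / (γ - 1)) fun x hx =>
      scadWeight_of_mem_Icc hγ hlam (Set.uIcc_of_le hlam_le ▸ hx)]
    rw [intervalIntegral.integral_div, intervalIntegral.integral_sub intervalIntegrable_const
      ((continuous_id'.div_const lam).intervalIntegrable _ _), intervalIntegral.integral_const,
      intervalIntegral.integral_div, integral_id]
    field_simp [(by linarith : γ - 1 ≠ 0)]
    ring
  have vanish : ∫ x in γ * lam..s, scadWeight γ lam x = 0 := by
    rw [intervalIntegral.integral_congr (g := fun _ => (0 : ℝ)) fun x hx =>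
      scadWeight_of_ge hlam (Set.uIcc_of_le hs ▸ hx).1]
    simp
  rw [← intervalIntegral.integral_add_adjacent_intervals (hint 0 (γ * lam)) (hint _ s),
    ← intervalIntegral.integral_add_adjacent_intervals (hint 0 lam) (hint lam _), flat, ramp,
    vanish]
  ring

end scadWeight

theorem scadPenalty_eq_mul_integral_scadWeight (γ lam t : ℝ) :
    scadPenalty γ lam t = lam * ∫ x in (0 : ℝ)..|t|, scadWeight γ lam x :=
  rfl

theorem scadPenalty_of_le_abs {γ lam t : ℝ} (hγ : 1 < γ) (hlam : 0 < lam) (ht : γ * lam ≤ |t|) :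
    scadPenalty γ lam t = lam ^ 2 * (γ + 1) / 2 := by
  rw [scadPenalty_eq_mul_integral_scadWeight, integral_scadWeight_of_le hγ hlam ht]
  ring

theorem norm_inv_card_smul_sum_sub_le {ι E : Type*} [SeminormedAddCommGroup E] [NormedSpace ℝ E]
    {S : Finset ι} (hS : S.Nonempty) {v : ι → E} {c : E} {ε : ℝ}
    (hv : ∀ i ∈ S, ‖v i - c‖ ≤ ε) :
    ‖(#S : ℝ)⁻¹ • ∑ i ∈ S, v i - c‖ ≤ ε := by
  have hmem := (convex_closedBall c ε).centerMass_mem (t := S) (w := fun _ => (1 : ℝ)) (z := v)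
    (fun _ _ => zero_le_one) (by simpa using hS.card_pos)
    (fun i hi => by simpa [dist_eq_norm] using hv i hi)
  simpa [Finset.centerMass, dist_eq_norm] using hmem

theorem norm_sub_sub_two_mul_le {E : Type*} [SeminormedAddCommGroup E] {a a' c c' : E} {ε : ℝ}
    (ha : ‖a - c‖ ≤ ε) (ha' : ‖a' - c'‖ ≤ ε) :
    ‖c - c'‖ - 2 * ε ≤ ‖a - a'‖ := by
  have h₁ := norm_sub_le_norm_sub_add_norm_sub c a c'
  have h₂ := norm_sub_le_norm_sub_add_norm_sub a a' c'
  rw [norm_sub_rev c a] at h₁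
  linarith

theorem grouped_scad_penalty_constant_general
    (m p K : ℕ)
    (grp : Fin m → Fin K) (hsurj : Function.Surjective grp)
    (γ lam : ℝ) (hγ : 1 < γ) (hlam : 0 < lam)
    (b ε : ℝ)
    (α0 : Fin K → EuclideanSpace ℝ (Fin p))
    (hsep : ∀ k k' : Fin K, k ≠ k' → b ≤ ‖α0 k - α0 k'‖)
    (β β0 : Fin m → EuclideanSpace ℝ (Fin p))
    (hβ0 : ∀ i, β0 i = α0 (grp i))
    (hclose : ∀ i, ‖β i - β0 i‖ ≤ ε)
    (α : Fin K → EuclideanSpace ℝ (Fin p))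
    (hα : ∀ k, α k = (((univ.filter (fun i => grp i = k)).card : ℝ))⁻¹ •
      ∑ i ∈ univ.filter (fun i => grp i = k), β i)
    (hgap : γ * lam < b - 2 * ε) :
    (∀ k k' : Fin K, k ≠ k' → γ * lam < ‖α k - α k'‖) ∧
    (∑ kk' ∈ univ.filter (fun kk' : Fin K × Fin K => kk'.1 < kk'.2),
        ((univ.filter (fun i => grp i = kk'.1)).card : ℝ) *
          ((univ.filter (fun i => grp i = kk'.2)).card : ℝ) *
            scadPenalty γ lam ‖α kk'.1 - α kk'.2‖)
      = (lam ^ 2 * (γ + 1) / 2) *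
          ∑ kk' ∈ univ.filter (fun kk' : Fin K × Fin K => kk'.1 < kk'.2),
            ((univ.filter (fun i => grp i = kk'.1)).card : ℝ) *
              ((univ.filter (fun i => grp i = kk'.2)).card : ℝ) := by
  have average_close : ∀ k, ‖α k - α0 k‖ ≤ ε := fun k => by
    obtain ⟨i, hi⟩ := hsurj k
    rw [hα]
    refine norm_inv_card_smul_sum_sub_le ⟨i, by simpa using hi⟩ fun j hj => ?_
    rw [← (mem_filter.1 hj).2, ← hβ0]
    exact hclose j
  have separated : ∀ k k' : Fin K, k ≠ k' → γ * lam < ‖α k - α k'‖ := fun k k' hkk' => by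
    linarith [hsep k k' hkk', norm_sub_sub_two_mul_le (average_close k) (average_close k')]
  refine ⟨separated, ?_⟩
  rw [mul_sum]
  refine sum_congr rfl fun kk' hkk' => ?_
  rw [scadPenalty_of_le_abs hγ hlam
    (by rw [abs_norm]; exact (separated _ _ (mem_filter.1 hkk').2.ne).le)]
  ring

/-- If the true group centers `α0` are `b`-separated, `β` is within `ε` of
the groupwise-constant truth, and `b − 2ε > γλ`, then the groupwise averages `α k` of `β`
are more than `γλ` apart, and hence the grouped SCAD penalty
`∑_{k < k'} |𝒢_k||𝒢_{k'}| p_γ(‖α_k − α_{k'}‖, λ)` equals the constant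
`(λ²(γ+1)/2) ∑_{k < k'} |𝒢_k||𝒢_{k'}|`, independent of `β`. -/
theorem grouped_scad_penalty_constant
    (m p K : ℕ) (hm : 1 ≤ m) (hp : 1 ≤ p) (hK : 2 ≤ K)
    (grp : Fin m → Fin K) (hsurj : Function.Surjective grp)
    (γ lam : ℝ) (hγ : 1 < γ) (hlam : 0 < lam)
    (b ε : ℝ)
    (α0 : Fin K → EuclideanSpace ℝ (Fin p))
    (hsep : ∀ k k' : Fin K, k ≠ k' → b ≤ ‖α0 k - α0 k'‖)
    (β β0 : Fin m → EuclideanSpace ℝ (Fin p))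
    (hβ0 : ∀ i, β0 i = α0 (grp i))
    (hclose : ∀ i, ‖β i - β0 i‖ ≤ ε)
    (α : Fin K → EuclideanSpace ℝ (Fin p))
    (hα : ∀ k, α k = (((univ.filter (fun i => grp i = k)).card : ℝ))⁻¹ •
      ∑ i ∈ univ.filter (fun i => grp i = k), β i)
    (hgap : γ * lam < b - 2 * ε) :
    (∀ k k' : Fin K, k ≠ k' → γ * lam < ‖α k - α k'‖) ∧
    (∑ kk' ∈ univ.filter (fun kk' : Fin K × Fin K => kk'.1 < kk'.2),
        ((univ.filter (fun i => grp i = kk'.1)).card : ℝ) *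
          ((univ.filter (fun i => grp i = kk'.2)).card : ℝ) *
            scadPenalty γ lam ‖α kk'.1 - α kk'.2‖)
      = (lam ^ 2 * (γ + 1) / 2) *
          ∑ kk' ∈ univ.filter (fun kk' : Fin K × Fin K => kk'.1 < kk'.2),
            ((univ.filter (fun i => grp i = kk'.1)).card : ℝ) *
              ((univ.filter (fun i => grp i = kk'.2)).card : ℝ) :=
  grouped_scad_penalty_constant_general m p K grp hsurj γ lam hγ hlam b ε α0 hsep β β0 hβ0 hclose α
    hα hgap
end
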